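/- arXiv:1105.6047 — 2 statements merged into one kernel-verified Lean document; each statement's English description precedes it below -/
import Mathlib

section
/- For φ ∈ Γ*, for almost every t ∈ [0,1] and all r < s, one has the monotonicity L_r(p_r(φ(t))) ≤ L_s(p_s(φ(t))). -/
open MeasureTheory Real Set Filter Topology
open scoped ENNReal

noncomputable section

attribute [local instance] Classical.propDecidable

/-! ## Basic setting -/

abbrev I01 : Set ℝ := Set.Icc (0:ℝ) 1

def pt0 : I01 := ⟨0, Set.left_mem_Icc.mpr zero_le_one⟩

/-- Piecewise continuity on `[0,1]`: continuity off finitely many points. -/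
def PiecewiseContinuousOn01 (f : ℝ → ℝ) : Prop :=
  ∃ D : Finset ℝ, ∀ t ∈ Set.Icc (0:ℝ) 1, t ∉ D → ContinuousWithinAt f (Set.Icc (0:ℝ) 1) t

/-- Piecewise continuity on `[0,∞)`. -/
def PiecewiseContinuousOnIci (f : ℝ → ℝ) : Prop :=
  ∃ D : Set ℝ, (∀ T > (0:ℝ), (D ∩ Set.Icc 0 T).Finite) ∧
    ∀ t ∈ Set.Ici (0:ℝ), t ∉ D → ContinuousWithinAt f (Set.Ici (0:ℝ)) t

/-- Assumption (ND) on the time-dependent parameters `p, β`. -/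
structure ND (p β : ℝ → ℝ) (p0 β0 β1 : ℝ) : Prop where
  p_nonneg : ∀ t ∈ Set.Icc (0:ℝ) 1, 0 ≤ p t
  p_le : ∀ t ∈ Set.Icc (0:ℝ) 1, p t ≤ p0
  p0_lt_one : p0 < 1
  β_lb : ∀ t ∈ Set.Icc (0:ℝ) 1, β0 ≤ β t
  β_ub : ∀ t ∈ Set.Icc (0:ℝ) 1, β t ≤ β1
  β0_pos : 0 < β0
  p_pc : PiecewiseContinuousOn01 p
  β_pc : PiecewiseContinuousOn01 β

/-- Assumption (ND), extended to `[0,∞)`. -/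
structure NDIci (p β : ℝ → ℝ) (p0 β0 β1 : ℝ) : Prop where
  p_nonneg : ∀ t ∈ Set.Ici (0:ℝ), 0 ≤ p t
  p_le : ∀ t ∈ Set.Ici (0:ℝ), p t ≤ p0
  p0_lt_one : p0 < 1
  β_lb : ∀ t ∈ Set.Ici (0:ℝ), β0 ≤ β t
  β_ub : ∀ t ∈ Set.Ici (0:ℝ), β t ≤ β1
  β0_pos : 0 < β0
  p_pc : PiecewiseContinuousOnIci p
  β_pc : PiecewiseContinuousOnIci β

/-- The limiting initial data `(c_i)`, `c = Σ_i c_i`, `c̃ = Σ_i i c_i` of assumption (LIM). -/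
structure LIMc (c : ℕ → ℝ) (cc ctil : ℝ) : Prop where
  nonneg : ∀ i, 0 ≤ c i
  summable : Summable c
  cc_eq : cc = ∑' i, c i
  mul_summable : Summable (fun i : ℕ => (i : ℝ) * c i)
  ctil_eq : ctil = ∑' i : ℕ, (i : ℝ) * c i

/-- Assumption (LIM) for the array of initial urn configurations `init n i = Z_i^n(0)`. -/
structure LIM (init : ℕ → ℕ → ℕ) (c : ℕ → ℝ) (cc ctil : ℝ) : Prop where
  c_lim : ∀ i, Tendsto (fun n : ℕ => (init n i : ℝ) / n) atTop (𝓝 (c i))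
  ctil_lim : Tendsto (fun n : ℕ => ∑' i : ℕ, (i : ℝ) * (init n i : ℝ) / n) atTop (𝓝 ctil)
  ctil_eq : ctil = ∑' i : ℕ, (i : ℝ) * c i
  mul_summable : Summable (fun i : ℕ => (i : ℝ) * c i)
  c_summable : Summable c
  cc_eq : cc = ∑' i, c i
  finite_support : ∀ n, ∃ K, ∀ k, K ≤ k → init n k = 0

/-- The total-weight normalization `σ(t) = (1+β(t))t + c̃ + cβ(t)`. -/
def sigf (β : ℝ → ℝ) (cc ctil t : ℝ) : ℝ := (1 + β t) * t + ctil + cc * β t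

/-- The truncated initial vector `c^d = (c_0, …, c_d, Σ_{i>d} c_i)`. -/
def cvec (d : ℕ) (c : ℕ → ℝ) : Fin (d+2) → ℝ :=
  fun i => if (i : ℕ) ≤ d then c i else ∑' k : ℕ, c (k + (d+1))

/-- View a vector in `ℝ^{d+2}` as an `ℕ`-indexed sequence (zero for large indices). -/
def toN {d : ℕ} (g : Fin (d+2) → ℝ) : ℕ → ℝ := fun i => if h : i < d+2 then g ⟨i, h⟩ else 0

/-- `ℕ`-indexed version of `c^d`. -/
def cvecN (d : ℕ) (c : ℕ → ℝ) : ℕ → ℝ := toN (cvec d c)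

/-- Extension of a path on `[0,1]` to all of `ℝ` (constant outside `[0,1]`). -/
def pext {d : ℕ} (φ : C(I01, Fin (d+2) → ℝ)) : ℝ → Fin (d+2) → ℝ :=
  fun t => φ (Set.projIcc 0 1 zero_le_one t)

/-- Coordinatewise derivative of a path. -/
def pderivC {d : ℕ} (φ : C(I01, Fin (d+2) → ℝ)) (t : ℝ) (i : Fin (d+2)) : ℝ :=
  deriv (fun s => pext φ s i) t

def xofN {d : ℕ} (φ : C(I01, Fin (d+2) → ℝ)) (t : ℝ) : ℕ → ℝ := toN (pext φ t)

def vofN {d : ℕ} (φ : C(I01, Fin (d+2) → ℝ)) (t : ℝ) : ℕ → ℝ := toN (fun i => pderivC φ t i)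

/-! ## The rate function integrand, with the conventions `0·log 0 = 0/0 = 0`, `1/0 = ∞` -/

/-- `a log(a/b)` as an extended real, with the conventions `0 log 0 = 0·(0/0) = 0` and
`a log(a/0) = ∞` for `a ≠ 0`. -/
def entTerm (a b : ℝ) : EReal :=
  if a = 0 then (0 : EReal) else if b ≤ 0 then (⊤ : EReal)
  else ((a * Real.log (a / b) : ℝ) : EReal)

/-- `1 - [v]_i`, the numerator attached to the increment `f_i`. -/
def numA (v : ℕ → ℝ) (i : ℕ) : ℝ := 1 - ∑ l ∈ Finset.range (i+1), v l

/-- `1 - Σ_{i=0}^d (1-[v]_i)`, the numerator attached to the increment `f_{d+1}`. -/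
def numALast (v : ℕ → ℝ) (d : ℕ) : ℝ := 1 - ∑ i ∈ Finset.range (d+1), numA v i

/-- The natural increment probabilities `u_i`, `0 ≤ i ≤ d`. -/
def denB (p β : ℝ → ℝ) (cc ctil : ℝ) (t : ℝ) (x : ℕ → ℝ) (i : ℕ) : ℝ :=
  if i = 0 then p t + (1 - p t) * (β t * x 0 / sigf β cc ctil t)
  else (1 - p t) * (((i : ℝ) + β t) * x i / sigf β cc ctil t)

/-- The natural increment probability `u_{d+1}`. -/
def denBLast (p β : ℝ → ℝ) (cc ctil : ℝ) (t : ℝ) (x : ℕ → ℝ) (d : ℕ) : ℝ :=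
  (1 - p t) * (1 - (∑ i ∈ Finset.range (d+1), ((i : ℝ) + β t) * x i) / sigf β cc ctil t)

/-- The relative-entropy integrand `L_d(t, x, ẋ)` of the rate function `I_d`. -/
def LdE (p β : ℝ → ℝ) (cc ctil : ℝ) (d : ℕ) (t : ℝ) (x v : ℕ → ℝ) : EReal :=
  (∑ i ∈ Finset.range (d+1), entTerm (numA v i) (denB p β cc ctil t x i))
    + entTerm (numALast v d) (denBLast p β cc ctil t x d)

/-- The set `Γ_d` of admissible paths. -/
def Gamma (d : ℕ) (c : ℕ → ℝ) : Set (C(I01, Fin (d+2) → ℝ)) :=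
  {φ | (∀ i, φ pt0 i = cvec d c i)
    ∧ (∀ (t : I01) (i : Fin (d+2)), 0 ≤ φ t i)
    ∧ (∀ i : Fin (d+2), LipschitzWith 1 (fun t : ℝ => pext φ t i))
    ∧ (∀ᵐ t ∂(volume.restrict (Set.Icc (0:ℝ) 1)),
        (∀ i ≤ d, 0 ≤ ∑ l ∈ Finset.range (i+1), vofN φ t l
            ∧ ∑ l ∈ Finset.range (i+1), vofN φ t l ≤ 1)
        ∧ (∑ i ∈ Finset.range (d+2), vofN φ t i = 1)
        ∧ (∑ i ∈ Finset.range (d+2), (i : ℝ) * vofN φ t i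
            = ∑ i ∈ Finset.range (d+1), numA (vofN φ t) i)
        ∧ ∑ i ∈ Finset.range (d+1), numA (vofN φ t) i ≤ 1)}

/-- Extended reals to `[0,∞]`, sending `⊤` to `⊤` and negatives to `0`. -/
def erealToENNReal (x : EReal) : ℝ≥0∞ := if x = ⊤ then ⊤ else ENNReal.ofReal x.toReal

/-- The finite-dimensional rate function `I_d`. -/
def Irate (p β : ℝ → ℝ) (c : ℕ → ℝ) (cc ctil : ℝ) (d : ℕ)
    (φ : C(I01, Fin (d+2) → ℝ)) : ℝ≥0∞ :=
  if φ ∈ Gamma d c then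
    ∫⁻ t in Set.Icc (0:ℝ) 1, erealToENNReal (LdE p β cc ctil d t (xofN φ t) (vofN φ t))
  else ⊤

/-- The large deviation principle with rate `n` and good rate function `I`:
compact level sets, upper bound over closed sets, lower bound over open sets. -/
def IsLDP {Ω : Type*} [MeasurableSpace Ω] {Y : Type*} [TopologicalSpace Y]
    (μ : Measure Ω) (Xn : ℕ → Ω → Y) (I : Y → ℝ≥0∞) : Prop :=
  (∀ M : ℝ≥0∞, M ≠ ⊤ → IsCompact {x | I x ≤ M})
  ∧ (∀ F : Set Y, IsClosed F →
      Filter.limsup (fun n : ℕ => ((Real.log ((μ ((Xn n) ⁻¹' F)).toReal) / n : ℝ) : EReal))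
          Filter.atTop ≤ -((⨅ x ∈ F, I x : ℝ≥0∞) : EReal))
  ∧ (∀ G : Set Y, IsOpen G →
      -((⨅ x ∈ G, I x : ℝ≥0∞) : EReal)
        ≤ Filter.liminf (fun n : ℕ => ((Real.log ((μ ((Xn n) ⁻¹' G)).toReal) / n : ℝ) : EReal))
            Filter.atTop)

/-- Convexity of an `[0,∞]`-valued rate function. -/
def ConvexRate {Y : Type*} [AddCommMonoid Y] [Module ℝ Y] (I : Y → ℝ≥0∞) : Prop :=
  ∀ x y : Y, ∀ a b : ℝ, 0 ≤ a → 0 ≤ b → a + b = 1 →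
    I (a • x + b • y) ≤ ENNReal.ofReal a * I x + ENNReal.ofReal b * I y

/-- The `L¹` norm on `ℝ^{d+2}`. -/
def l1norm {d : ℕ} (v : Fin (d+2) → ℝ) : ℝ := ∑ i, |v i|

/-! ## The time-dependent preferential attachment urn process -/

/-- Effect of the increment `f_i` on an urn configuration `z` (`z k` = number of urns
with exactly `k` balls): for `i = 0` a ball enters an urn of size `0` (or the new urn);
for `i ≥ 1` a new empty urn is created and an urn of size `i` becomes one of size `i+1`. -/
def applyF (i : ℕ) (z : ℕ → ℕ) : ℕ → ℕ :=
  if i = 0 then Function.update z 1 (z 1 + 1)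
  else fun k => if k = 0 then z 0 + 1 else if k = i then z i - 1
    else if k = i + 1 then z (i+1) + 1 else z k

/-- Total weight `Σ_k (k + β) z_k` of a configuration. -/
def urnWeight (βv : ℝ) (z : ℕ → ℕ) : ℝ := ∑' k : ℕ, ((k : ℝ) + βv) * (z k : ℝ)

/-- One-step transition probability of the urn scheme from `z` to `z'`. -/
def stepProb (pv βv : ℝ) (z z' : ℕ → ℕ) : ℝ :=
  ∑' i : ℕ,
    if z' = applyF i z then
      (if i = 0 then pv + (1 - pv) * (βv * (z 0 : ℝ) / urnWeight βv z)
       else (1 - pv) * (((i : ℝ) + βv) * (z i : ℝ) / urnWeight βv z))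
    else 0

/-- `Z n j ω k` is the number of urns with `k` balls at step `j` in the `n`-th row; the law
of each row is that of the time-dependent preferential attachment urn Markov chain. -/
def UrnLaw {Ω : Type*} [MeasurableSpace Ω] (μ : Measure Ω) (p β : ℝ → ℝ)
    (init : ℕ → ℕ → ℕ) (Z : ℕ → ℕ → Ω → ℕ → ℕ) : Prop :=
  (∀ n ω, Z n 0 ω = init n) ∧
  ∀ n : ℕ, 1 ≤ n → ∀ traj : ℕ → ℕ → ℕ, traj 0 = init n →
    μ {ω | ∀ j ≤ n, Z n j ω = traj j}
      = ENNReal.ofReal (∏ j ∈ Finset.range n,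
          stepProb (p ((j : ℝ) / n)) (β ((j : ℝ) / n)) (traj j) (traj (j+1)))

/-- Truncated degree vector `(Z_0, …, Z_d, Z̄_{d+1})` of a configuration. -/
def Ztrunc (d : ℕ) (z : ℕ → ℕ) : Fin (d+2) → ℝ :=
  fun i => if (i : ℕ) ≤ d then (z i : ℝ) else ∑' k : ℕ, (z (k + (d+1)) : ℝ)

/-- `X n` is the path `X^{n,d}`, the linear interpolation of `(1/n) Z^{n,d}(⌊nt⌋)`. -/
def InterpD {Ω : Type*} (d : ℕ) (Z : ℕ → ℕ → Ω → ℕ → ℕ)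
    (X : ℕ → Ω → C(I01, Fin (d+2) → ℝ)) : Prop :=
  ∀ n : ℕ, 1 ≤ n → ∀ ω (t : I01) (i : Fin (d+2)),
    X n ω t i
      = (1 - ((n : ℝ) * (t : ℝ) - (⌊(n : ℝ) * (t : ℝ)⌋₊ : ℝ)))
          * Ztrunc d (Z n ⌊(n : ℝ) * (t : ℝ)⌋₊ ω) i / n
        + ((n : ℝ) * (t : ℝ) - (⌊(n : ℝ) * (t : ℝ)⌋₊ : ℝ))
          * Ztrunc d (Z n (⌊(n : ℝ) * (t : ℝ)⌋₊ + 1) ω) i / n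

/-- `X n` is the path `X^{n,∞}`, the linear interpolation of `(1/n) Z^{n,∞}(⌊nt⌋)`. -/
def InterpInf {Ω : Type*} (Z : ℕ → ℕ → Ω → ℕ → ℕ)
    (X : ℕ → Ω → ∀ _ : ℕ, C(I01, ℝ)) : Prop :=
  ∀ n : ℕ, 1 ≤ n → ∀ ω (i : ℕ) (t : I01),
    X n ω i t
      = (1 - ((n : ℝ) * (t : ℝ) - (⌊(n : ℝ) * (t : ℝ)⌋₊ : ℝ)))
          * (Z n ⌊(n : ℝ) * (t : ℝ)⌋₊ ω i : ℝ) / n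
        + ((n : ℝ) * (t : ℝ) - (⌊(n : ℝ) * (t : ℝ)⌋₊ : ℝ))
          * (Z n (⌊(n : ℝ) * (t : ℝ)⌋₊ + 1) ω i : ℝ) / n

/-! ## The infinite-dimensional rate function -/

def extOne (f : C(I01, ℝ)) : ℝ → ℝ := fun t => f (Set.projIcc 0 1 zero_le_one t)

def xofInf (ξ : ∀ _ : ℕ, C(I01, ℝ)) (t : ℝ) : ℕ → ℝ := fun i => extOne (ξ i) t

def vofInf (ξ : ∀ _ : ℕ, C(I01, ℝ)) (t : ℝ) : ℕ → ℝ := fun i => deriv (extOne (ξ i)) t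

/-- The set `Γ^∞` of admissible infinite-dimensional paths. -/
def GammaInf (c : ℕ → ℝ) : Set (∀ _ : ℕ, C(I01, ℝ)) :=
  {ξ | (∀ i, ξ i pt0 = c i)
    ∧ (∀ i (t : I01), 0 ≤ ξ i t)
    ∧ (∀ i, LipschitzWith 1 (extOne (ξ i)))
    ∧ (∀ t : I01, Summable (fun i => ξ i t))
    ∧ (∀ᵐ t ∂(volume.restrict (Set.Icc (0:ℝ) 1)),
        (∀ i : ℕ, 0 ≤ ∑ l ∈ Finset.range (i+1), vofInf ξ t l
            ∧ ∑ l ∈ Finset.range (i+1), vofInf ξ t l ≤ 1)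
        ∧ HasDerivAt (fun s : ℝ => ∑' i, extOne (ξ i) s) 1 t
        ∧ Summable (fun i => numA (vofInf ξ t) i)
        ∧ ∑' i, numA (vofInf ξ t) i ≤ 1)}

/-- The infinite-dimensional rate function `I^∞`. -/
def IrateInf (p β : ℝ → ℝ) (c : ℕ → ℝ) (cc ctil : ℝ) (ξ : ∀ _ : ℕ, C(I01, ℝ)) : ℝ≥0∞ :=
  if ξ ∈ GammaInf c then
    ∫⁻ t in Set.Icc (0:ℝ) 1,
      ⨆ d : ℕ, erealToENNReal (LdE p β cc ctil d t (xofInf ξ t) (vofInf ξ t))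
  else ⊤

/-! ## Projective limit setting -/

/-- The truncation `p_{ij} : ℝ^{j+2} → ℝ^{i+2}`, `(x_0,…,x_{j+1}) ↦ (x_0,…,x_i, Σ_{l>i} x_l)`. -/
def truncMap (i j : ℕ) (_hij : i ≤ j) : (Fin (j+2) → ℝ) → (Fin (i+2) → ℝ) :=
  fun x k =>
    if (k : ℕ) ≤ i then x (Fin.castLE (by omega) k)
    else ∑ l : Fin (j+2), if i + 1 ≤ (l : ℕ) then x l else 0

lemma truncMap_continuous (i j : ℕ) (hij : i ≤ j) : Continuous (truncMap i j hij) := by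
  apply continuous_pi
  intro k
  show Continuous fun x : Fin (j+2) → ℝ => truncMap i j hij x k
  by_cases h : (k : ℕ) ≤ i
  · simp only [truncMap, if_pos h]
    exact continuous_apply _
  · simp only [truncMap, if_neg h]
    apply continuous_finset_sum
    intro l _
    by_cases hl : i + 1 ≤ (l : ℕ)
    · simp only [if_pos hl]; exact continuous_apply _
    · simp only [if_neg hl]; exact continuous_const

/-- The projection `p_{ij} : 𝒴_j → 𝒴_i` on path spaces. -/
def projMapC (i j : ℕ) (hij : i ≤ j) (φ : C(I01, Fin (j+2) → ℝ)) : C(I01, Fin (i+2) → ℝ) :=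
  ⟨fun t => truncMap i j hij (φ t), (truncMap_continuous i j hij).comp φ.continuous⟩

/-- The projective limit `lim← 𝒴_j ⊆ Π_j 𝒴_j`. -/
def ProjLim : Set (∀ j : ℕ, C(I01, Fin (j+2) → ℝ)) :=
  {x | ∀ (i j : ℕ) (hij : i ≤ j), projMapC i j hij (x j) = x i}

/-- `Γ* ⊆ lim← 𝒴_j`: compatible families with all coordinates admissible. -/
def GammaStar (c : ℕ → ℝ) : Set (∀ j : ℕ, C(I01, Fin (j+2) → ℝ)) :=
  {x | x ∈ ProjLim ∧ ∀ d, x d ∈ Gamma d c}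

/-- The projective-limit rate function `J^∞(φ) = sup_d I_d(p_d φ)`. -/
def Jinf (p β : ℝ → ℝ) (c : ℕ → ℝ) (cc ctil : ℝ)
    (x : ∀ j : ℕ, C(I01, Fin (j+2) → ℝ)) : ℝ≥0∞ :=
  if x ∈ ProjLim then ⨆ d : ℕ, Irate p β c cc ctil d (x d) else ⊤

/-! ## Carathéodory solutions of the LLN ODE systems -/

/-- A Carathéodory solution on `[0,T]` of `ẋ = F(t,x)`, `x(0) = x₀`, in coordinates `≤ N`
(equivalently, a solution of the associated integral equation). -/
def IsCaraSol (F : ℝ → (ℕ → ℝ) → ℕ → ℝ) (x0 : ℕ → ℝ) (N : ℕ) (T : ℝ) (f : ℝ → ℕ → ℝ) : Prop :=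
  ∀ i ≤ N, IntervalIntegrable (fun s => F s (f s) i) volume 0 T ∧
    ∀ t ∈ Set.Icc (0:ℝ) T, f t i = x0 i + ∫ s in (0:ℝ)..t, F s (f s) i

/-- A Carathéodory solution on `[0,∞)`. -/
def IsCaraSolIci (F : ℝ → (ℕ → ℝ) → ℕ → ℝ) (x0 : ℕ → ℝ) (N : ℕ) (f : ℝ → ℕ → ℝ) : Prop :=
  ∀ i ≤ N, (∀ T > (0:ℝ), IntervalIntegrable (fun s => F s (f s) i) volume 0 T) ∧
    ∀ t ∈ Set.Ici (0:ℝ), f t i = x0 i + ∫ s in (0:ℝ)..t, F s (f s) i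

/-- The vector field of the LLN ODE system, coordinates `i ≥ 0`. -/
def LLNfield0 (p β : ℝ → ℝ) (cc ctil : ℝ) (t : ℝ) (x : ℕ → ℝ) : ℕ → ℝ := fun i =>
  if i = 0 then 1 - p t - (1 - p t) * (β t * x 0 / sigf β cc ctil t)
  else (if i = 1 then p t else 0)
    + (1 - p t) * ((((i : ℝ) - 1) + β t) * x (i-1) / sigf β cc ctil t)
    - (1 - p t) * (((i : ℝ) + β t) * x i / sigf β cc ctil t)

/-- The vector field of the `d`-dimensional LLN ODE system (with the last coordinate
`φ̇_{d+1} = 1 - Σ_{i≤d} φ̇_i`). -/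
def LLNfield (p β : ℝ → ℝ) (cc ctil : ℝ) (d : ℕ) (t : ℝ) (x : ℕ → ℝ) : ℕ → ℝ := fun i =>
  if i ≤ d then LLNfield0 p β cc ctil t x i
  else if i = d + 1 then 1 - ∑ l ∈ Finset.range (d+1), LLNfield0 p β cc ctil t x l
  else 0

/-- Truncation of an infinite family `ζ` to the `d`-dimensional path
`(ζ_0, …, ζ_d, ζ̄_{d+1})` with `ζ̄_{d+1}(t) = t + c - Σ_{i≤d} ζ_i(t)`. -/
def truncSol (d : ℕ) (cc : ℝ) (ζ : ℕ → ℝ → ℝ) : ℝ → ℕ → ℝ := fun t i =>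
  if i ≤ d then ζ i t
  else if i = d + 1 then t + cc - ∑ l ∈ Finset.range (d+1), ζ l t
  else 0

/-- The integrating factor `M_i(s,t) = exp[-∫_s^t (1-p(u))(i+β(u))/σ(u) du]`. -/
def Mfac (p β : ℝ → ℝ) (cc ctil : ℝ) (i : ℕ) (s t : ℝ) : ℝ :=
  Real.exp (-(∫ u in s..t, (1 - p u) * (((i : ℝ) + β u) / sigf β cc ctil u)))

/-- The explicit solution formulas of the LLN ODE system. -/
def zetaExpl (p β : ℝ → ℝ) (cc ctil : ℝ) (c : ℕ → ℝ) : ℕ → ℝ → ℝ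
  | 0 => fun t => c 0 * Mfac p β cc ctil 0 0 t
      + ∫ s in (0:ℝ)..t, (1 - p s) * Mfac p β cc ctil 0 s t
  | (i+1) => fun t => c (i+1) * Mfac p β cc ctil (i+1) 0 t
      + ∫ s in (0:ℝ)..t,
          ((if i = 0 then p s else 0)
            + (1 - p s) * (((i : ℝ) + β s) * zetaExpl p β cc ctil c i s / sigf β cc ctil s))
          * Mfac p β cc ctil (i+1) s t

/-- The scalar field `G(t,x)` of the comparison ODE. -/
def Gfield (p β : ℝ → ℝ) (cc ctil : ℝ) (t x : ℝ) : ℝ :=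
  p t + (1 - p t) * ((x + β t * (t + cc)) / sigf β cc ctil t)

/-- A scalar Carathéodory solution on `[0,∞)`. -/
def IsCaraScalIci (G : ℝ → ℝ → ℝ) (x0 : ℝ) (f : ℝ → ℝ) : Prop :=
  (∀ T > (0:ℝ), IntervalIntegrable (fun s => G s (f s)) volume 0 T) ∧
    ∀ t ∈ Set.Ici (0:ℝ), f t = x0 + ∫ s in (0:ℝ)..t, G s (f s)

/-- The vector field of the comparison system `O(o₁,o₂,o₃,o₄,o₅)` (coordinates `0 ≤ i ≤ d`). -/
def OField (o1 o2 o3 o4 o5 : ℝ) (d : ℕ) (t : ℝ) (x : ℕ → ℝ) : ℕ → ℝ := fun i =>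
  if i = 0 then 1 - o1 - (1 - o2) * (o3 / (1 + o4)) * (x 0 / (t + o5))
  else if i ≤ d then
    (if i = 1 then o1 else 0)
      + (1 - o2) / (1 + o4) * (((((i : ℝ) - 1) + o3) * x (i-1) - ((i : ℝ) + o3) * x i) / (t + o5))
  else 0

/-! ## Constructions for the lower bound -/

/-- Convex combination `φ_θ = (1-θ)φ* + θℓ`. -/
def phiMix {d : ℕ} (θ : ℝ) (φstar ℓC : C(I01, Fin (d+2) → ℝ)) : C(I01, Fin (d+2) → ℝ) :=
  (1 - θ) • φstar + θ • ℓC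

/-- Block time-average `γ_κ` of the derivative of `φ` on the `κ`-block partition of `[0,1]`
(with `γ_κ(1) = γ_κ(1 - 1/κ)`). -/
def blockAvg {d : ℕ} (φ : C(I01, Fin (d+2) → ℝ)) (κ : ℕ) (t : ℝ) (i : Fin (d+2)) : ℝ :=
  (κ : ℝ) * ∫ s in (((min ⌊t * κ⌋₊ (κ-1) : ℕ) : ℝ)/κ)..((((min ⌊t * κ⌋₊ (κ-1) : ℕ) : ℝ) + 1)/κ),
      pderivC φ s i

/-- The regularized path `ψ_κ(t) = c^d + ∫_0^t γ_κ(s) ds`. -/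
def psiKappa {d : ℕ} (φ : C(I01, Fin (d+2) → ℝ)) (κ : ℕ) (c : ℕ → ℝ) (t : ℝ)
    (i : Fin (d+2)) : ℝ :=
  cvec d c i + ∫ s in (0:ℝ)..t, blockAvg φ κ s i

/-- The increment vectors `f_0, …, f_{d+1}` of the truncated chain. -/
def fvec (d : ℕ) (i : ℕ) : Fin (d+2) → ℝ := fun k =>
  if i = 0 then (if (k : ℕ) = 1 then 1 else 0)
  else if i ≤ d then
    (if (k : ℕ) = 0 then 1 else 0) + (if (k : ℕ) = i then -1 else 0)
      + (if (k : ℕ) = i + 1 then 1 else 0)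
  else if (k : ℕ) = 0 then 1 else 0

/-- The switching times `t_i = δ - Σ_{l=i}^d (δ + [c^d]_l - [ψ_κ(δ)]_l)`, `t_{d+1} = δ`. -/
def tSwitch {d : ℕ} (ψδ : Fin (d+2) → ℝ) (c : ℕ → ℝ) (δ : ℝ) : ℕ → ℝ := fun i =>
  if i ≤ d then
    δ - ∑ l ∈ Finset.Icc i d,
      (δ + (∑ m ∈ Finset.range (l+1), cvecN d c m) - (∑ m ∈ Finset.range (l+1), toN ψδ m))
  else δ

/-- The modified step derivative `γ*`: increment `f_{d+1}` on `[0,t_0)`, `f_i` on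
`[t_i, t_{i+1})` before time `δ`, and `γ_κ` from `δ` on. -/
def gammaStar {d : ℕ} (g : ℝ → Fin (d+2) → ℝ) (ts : ℕ → ℝ) (δ : ℝ) (t : ℝ) :
    Fin (d+2) → ℝ :=
  if δ ≤ t then g t
  else if t < ts 0 then fvec d (d+1)
  else fvec d (sSup {i : ℕ | i ≤ d ∧ ts i ≤ t})

def tSwitchFull {d : ℕ} (φstar ℓC : C(I01, Fin (d+2) → ℝ)) (θ : ℝ) (κ : ℕ) (c : ℕ → ℝ)
    (δ : ℝ) : ℕ → ℝ :=
  tSwitch (fun i => psiKappa (phiMix θ φstar ℓC) κ c δ i) c δ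

/-- `ψ̇* = γ*` built from the data `φ*, ℓ, θ, κ, δ`. -/
def gammaStarFull {d : ℕ} (φstar ℓC : C(I01, Fin (d+2) → ℝ)) (θ : ℝ) (κ : ℕ) (c : ℕ → ℝ)
    (δ : ℝ) : ℝ → Fin (d+2) → ℝ :=
  gammaStar (fun t => blockAvg (phiMix θ φstar ℓC) κ t) (tSwitchFull φstar ℓC θ κ c δ) δ

/-- The modified path `ψ*(t) = c^d + ∫_0^t γ*(s) ds`. -/
def psiStarFull {d : ℕ} (φstar ℓC : C(I01, Fin (d+2) → ℝ)) (θ : ℝ) (κ : ℕ) (c : ℕ → ℝ)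
    (δ : ℝ) (t : ℝ) : Fin (d+2) → ℝ :=
  fun i => cvec d c i + ∫ s in (0:ℝ)..t, gammaStarFull φstar ℓC θ κ c δ s i

/-! ## The controlled chain of the lower bound -/

/-- Mean of the control at step `l`: `ψ̇*(l/n)` if `l ≤ ⌊δn⌋`, or if `l ≥ ⌈δn⌉` and the
state is above the threshold; otherwise the mean `ρm l` of the natural increment law. -/
def ctrlMean {d : ℕ} (γs : ℝ → Fin (d+2) → ℝ) (ρm : ℕ → Fin (d+2) → ℝ)
    (Xb : ℕ → Fin (d+2) → ℝ) (c : ℕ → ℝ) (e : Fin (d+2) → ℝ) (θ δ : ℝ) (n l : ℕ) :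
    Fin (d+2) → ℝ :=
  if l ≤ ⌊δ * (n : ℝ)⌋₊ ∨ (⌈δ * (n : ℝ)⌉₊ ≤ l ∧ ∀ i, (θ/4) * (e i * δ + cvec d c i) ≤ Xb l i)
  then γs ((l : ℝ) / n) else ρm l

/-- The martingale `M^n(j) = X̄^n(j) - (1/n) Σ_{l<j} Ē(Ȳ^n(l) | X̄^n(l)) - c^d`. -/
def ctrlMart {d : ℕ} (γs : ℝ → Fin (d+2) → ℝ) (ρm : ℕ → Fin (d+2) → ℝ)
    (Xb : ℕ → Fin (d+2) → ℝ) (c : ℕ → ℝ) (e : Fin (d+2) → ℝ) (θ δ : ℝ) (n j : ℕ) :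
    Fin (d+2) → ℝ :=
  fun i => Xb j i - (1/(n:ℝ)) * ∑ l ∈ Finset.range j, ctrlMean γs ρm Xb c e θ δ n l i
    - cvec d c i

/-- The stopping time `τ_n = n ∧ min{⌈δn⌉ ≤ l ≤ n : X̄_i^n(l) < (θ/4)(e_i δ + c_i), some i}`. -/
def stopTau {d : ℕ} (Xb : ℕ → Fin (d+2) → ℝ) (c : ℕ → ℝ) (e : Fin (d+2) → ℝ)
    (θ δ : ℝ) (n : ℕ) : ℕ :=
  sInf ({n} ∪ {l : ℕ | ⌈δ * (n : ℝ)⌉₊ ≤ l ∧ l ≤ n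
    ∧ ∃ i, Xb l i < (θ/4) * (e i * δ + cvec d c i)})

/-! Compatibility of the family `φ ∈ Γ*` makes `L_r` and `L_s` share their terms `i ≤ r`, while
the last term of `L_r` lumps the terms `r < i ≤ s + 1` of `L_s` together, numerators and
denominators alike. The log-sum inequality then gives `L_r ≤ L_s`, as soon as all these
numerators and denominators are nonnegative. For the numerators this is part of admissibility;
for the last denominator it amounts to `Σ_{i ≤ s} (i + β) φ_i(t) ≤ σ(t)`, which follows by
integrating the velocity constraints of `Γ_s` from the initial value `c^s`. -/

/-- The log-sum inequality: `a log (a / b) = b · f (a / b)` for the convex `f x = x log x`. -/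
theorem add_mul_log_div_add_le {a₁ a₂ b₁ b₂ : ℝ} (ha₁ : 0 < a₁) (ha₂ : 0 < a₂)
    (hb₁ : 0 < b₁) (hb₂ : 0 < b₂) :
    (a₁ + a₂) * log ((a₁ + a₂) / (b₁ + b₂)) ≤ a₁ * log (a₁ / b₁) + a₂ * log (a₂ / b₂) := by
  have hb : 0 < b₁ + b₂ := add_pos hb₁ hb₂
  have hjensen := Real.convexOn_mul_log.2 (mem_Ici.2 (div_pos ha₁ hb₁).le)
    (mem_Ici.2 (div_pos ha₂ hb₂).le) (div_pos hb₁ hb).le (div_pos hb₂ hb).le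
    (by field_simp)
  have hmix : b₁ / (b₁ + b₂) * (a₁ / b₁) + b₂ / (b₁ + b₂) * (a₂ / b₂)
      = (a₁ + a₂) / (b₁ + b₂) := by
    field_simp
  simp only [smul_eq_mul, hmix] at hjensen
  calc (a₁ + a₂) * log ((a₁ + a₂) / (b₁ + b₂))
      = (b₁ + b₂) * ((a₁ + a₂) / (b₁ + b₂) * log ((a₁ + a₂) / (b₁ + b₂))) := by
        field_simp
    _ ≤ (b₁ + b₂) * (b₁ / (b₁ + b₂) * (a₁ / b₁ * log (a₁ / b₁))
          + b₂ / (b₁ + b₂) * (a₂ / b₂ * log (a₂ / b₂))) := by gcongr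
    _ = a₁ * log (a₁ / b₁) + a₂ * log (a₂ / b₂) := by field_simp

lemma entTerm_zero_left (b : ℝ) : entTerm 0 b = 0 := if_pos rfl

lemma entTerm_ne_bot (a b : ℝ) : entTerm a b ≠ ⊥ := by
  unfold entTerm
  split_ifs
  · exact EReal.zero_ne_bot
  · exact top_ne_bot
  · exact EReal.coe_ne_bot _

lemma entTerm_antitone_right {a b b' : ℝ} (ha : 0 ≤ a) (hb : b ≤ b') :
    entTerm a b' ≤ entTerm a b := by
  unfold entTerm
  split_ifs with ha0 hb'0 hb0 hb0
  all_goals first | exact le_rfl | exact le_top | skip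
  · exact absurd (hb.trans hb'0) hb0
  · have ha : 0 < a := lt_of_le_of_ne ha (Ne.symm ha0)
    have hb0 : 0 < b := lt_of_not_ge hb0
    exact EReal.coe_le_coe_iff.2 (mul_le_mul_of_nonneg_left (Real.log_le_log
      (div_pos ha (hb0.trans_le hb)) (div_le_div_of_nonneg_left ha.le hb0 hb)) ha.le)

lemma entTerm_add_le {a₁ a₂ b₁ b₂ : ℝ} (ha₁ : 0 ≤ a₁) (ha₂ : 0 ≤ a₂)
    (hb₁ : 0 ≤ b₁) (hb₂ : 0 ≤ b₂) :
    entTerm (a₁ + a₂) (b₁ + b₂) ≤ entTerm a₁ b₁ + entTerm a₂ b₂ := by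
  rcases ha₁.eq_or_lt with rfl | ha₁
  · rw [zero_add, entTerm_zero_left, zero_add]
    exact entTerm_antitone_right ha₂ (le_add_of_nonneg_left hb₁)
  rcases ha₂.eq_or_lt with rfl | ha₂
  · rw [add_zero, entTerm_zero_left, add_zero]
    exact entTerm_antitone_right ha₁.le (le_add_of_nonneg_right hb₂)
  rcases hb₁.eq_or_lt with rfl | hb₁
  · rw [show entTerm a₁ 0 = ⊤ by simp [entTerm, ha₁.ne'],
      EReal.top_add_of_ne_bot (entTerm_ne_bot _ _)]
    exact le_top
  rcases hb₂.eq_or_lt with rfl | hb₂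
  · rw [show entTerm a₂ 0 = ⊤ by simp [entTerm, ha₂.ne'],
      EReal.add_top_of_ne_bot (entTerm_ne_bot _ _)]
    exact le_top
  simp only [entTerm, (add_pos ha₁ ha₂).ne', ha₁.ne', ha₂.ne', not_le.2 (add_pos hb₁ hb₂),
    not_le.2 hb₁, not_le.2 hb₂, if_false, ← EReal.coe_add, EReal.coe_le_coe_iff]
  exact add_mul_log_div_add_le ha₁ ha₂ hb₁ hb₂

lemma entTerm_sum_le {ι : Type*} (s : Finset ι) {a b : ι → ℝ}
    (ha : ∀ i ∈ s, 0 ≤ a i) (hb : ∀ i ∈ s, 0 ≤ b i) :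
    entTerm (∑ i ∈ s, a i) (∑ i ∈ s, b i) ≤ ∑ i ∈ s, entTerm (a i) (b i) := by
  classical
  induction s using Finset.induction_on with
  | empty => simp [entTerm]
  | insert j s hj ih =>
    simp only [Finset.forall_mem_insert] at ha hb
    rw [Finset.sum_insert hj, Finset.sum_insert hj, Finset.sum_insert hj]
    exact (entTerm_add_le ha.1 (Finset.sum_nonneg ha.2) hb.1 (Finset.sum_nonneg hb.2)).trans
      (add_le_add le_rfl (ih ha.2 hb.2))

section Integrand

variable (p β : ℝ → ℝ) (cc ctil t : ℝ)

lemma numALast_eq_sum_Ico_add (v : ℕ → ℝ) {r s : ℕ} (hrs : r ≤ s) :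
    numALast v r = ∑ i ∈ Finset.Ico (r+1) (s+1), numA v i + numALast v s := by
  simp only [numALast, ← Finset.sum_range_add_sum_Ico _ (Nat.succ_le_succ hrs)]
  ring

lemma denBLast_eq_sum_Ico_add (x : ℕ → ℝ) {r s : ℕ} (hrs : r ≤ s) :
    denBLast p β cc ctil t x r
      = ∑ i ∈ Finset.Ico (r+1) (s+1), denB p β cc ctil t x i + denBLast p β cc ctil t x s := by
  have hden : ∀ i ∈ Finset.Ico (r+1) (s+1),
      denB p β cc ctil t x i = (1 - p t) * (((i : ℝ) + β t) * x i / sigf β cc ctil t) :=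
    fun i hi => if_neg (by have := (Finset.mem_Ico.1 hi).1; omega)
  rw [Finset.sum_congr rfl hden, ← Finset.mul_sum, ← Finset.sum_div]
  simp only [denBLast, ← Finset.sum_range_add_sum_Ico _ (Nat.succ_le_succ hrs), add_div]
  ring

variable {p β cc ctil t}

lemma LdE_congr {r : ℕ} {x x' v v' : ℕ → ℝ} (hx : ∀ i ≤ r, x i = x' i)
    (hv : ∀ i ≤ r, v i = v' i) :
    LdE p β cc ctil r t x v = LdE p β cc ctil r t x' v' := by
  have hA : ∀ i ≤ r, numA v i = numA v' i := fun i hi => by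
    simp only [numA]
    exact congrArg _ (Finset.sum_congr rfl fun l hl => hv l (by grind))
  have hB : ∀ i ≤ r, denB p β cc ctil t x i = denB p β cc ctil t x' i := fun i hi => by
    simp only [denB, hx i hi, hx 0 (Nat.zero_le r)]
  have hALast : numALast v r = numALast v' r :=
    congrArg _ (Finset.sum_congr rfl fun i hi => hA i (by grind))
  have hBLast : denBLast p β cc ctil t x r = denBLast p β cc ctil t x' r := by
    simp only [denBLast]
    congr 3
    exact Finset.sum_congr rfl fun i hi => by rw [hx i (by grind)]
  simp only [LdE, hALast, hBLast]
  congr 1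
  exact Finset.sum_congr rfl fun i hi => by rw [hA i (by grind), hB i (by grind)]

lemma LdE_le_LdE {x v : ℕ → ℝ} {r s : ℕ} (hrs : r ≤ s)
    (hA : ∀ i ∈ Finset.Ico (r+1) (s+1), 0 ≤ numA v i) (hALast : 0 ≤ numALast v s)
    (hB : ∀ i ∈ Finset.Ico (r+1) (s+1), 0 ≤ denB p β cc ctil t x i)
    (hBLast : 0 ≤ denBLast p β cc ctil t x s) :
    LdE p β cc ctil r t x v ≤ LdE p β cc ctil s t x v := by
  rw [LdE, LdE, ← Finset.sum_range_add_sum_Ico _ (Nat.succ_le_succ hrs), add_assoc,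
    numALast_eq_sum_Ico_add v hrs, denBLast_eq_sum_Ico_add p β cc ctil t x hrs]
  refine add_le_add le_rfl ?_
  calc _ ≤ entTerm (∑ i ∈ Finset.Ico (r+1) (s+1), numA v i)
          (∑ i ∈ Finset.Ico (r+1) (s+1), denB p β cc ctil t x i)
        + entTerm (numALast v s) (denBLast p β cc ctil t x s) :=
        entTerm_add_le (Finset.sum_nonneg hA) hALast (Finset.sum_nonneg hB) hBLast
    _ ≤ _ := add_le_add (entTerm_sum_le _ hA hB) le_rfl

end Integrand

section Paths

variable {d : ℕ} {c : ℕ → ℝ} {φ : C(I01, Fin (d+2) → ℝ)}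

lemma xofN_of_lt (φ : C(I01, Fin (d+2) → ℝ)) {i : ℕ} (hi : i < d+2) (u : ℝ) :
    xofN φ u i = pext φ u ⟨i, hi⟩ :=
  dif_pos hi

lemma xofN_of_not_lt (φ : C(I01, Fin (d+2) → ℝ)) {i : ℕ} (hi : ¬ i < d+2) (u : ℝ) :
    xofN φ u i = 0 :=
  dif_neg hi

lemma vofN_eq_deriv (φ : C(I01, Fin (d+2) → ℝ)) (t : ℝ) (i : ℕ) :
    vofN φ t i = deriv (fun u => xofN φ u i) t := by
  by_cases hi : i < d + 2
  · simp only [vofN, toN, dif_pos hi, pderivC, xofN_of_lt φ hi]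
  · simp only [vofN, toN, dif_neg hi, xofN_of_not_lt φ hi, deriv_const]

lemma lipschitzWith_xofN {K : NNReal} (hφ : ∀ i, LipschitzWith K fun u => pext φ u i)
    (i : ℕ) : LipschitzWith K fun u => xofN φ u i := by
  by_cases hi : i < d + 2
  · simpa only [xofN_of_lt φ hi] using hφ ⟨i, hi⟩
  · simpa only [xofN_of_not_lt φ hi] using LipschitzWith.const' (0 : ℝ)

lemma xofN_zero_of_mem_Gamma (hφ : φ ∈ Gamma d c) {i : ℕ} (hi : i ≤ d) :
    xofN φ 0 i = c i := by
  have hpt : Set.projIcc (0:ℝ) 1 zero_le_one 0 = pt0 := Subtype.ext (by simp [pt0])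
  rw [xofN_of_lt φ (by omega), pext, hpt, hφ.1]
  exact if_pos hi

lemma xofN_nonneg_of_mem_Gamma (hφ : φ ∈ Gamma d c) (u : ℝ) (i : ℕ) : 0 ≤ xofN φ u i := by
  by_cases hi : i < d + 2
  · exact xofN_of_lt φ hi u ▸ hφ.2.1 _ _
  · exact (xofN_of_not_lt φ hi u).ge

lemma sum_mul_xofN_le_of_mem_Gamma (hφ : φ ∈ Gamma d c) (w : ℕ → ℝ)
    (hw : ∀ᵐ t ∂(volume.restrict (Icc (0:ℝ) 1)),
      ∑ i ∈ Finset.range (d+1), w i * vofN φ t i ≤ 1)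
    {T : ℝ} (hT : T ∈ Icc (0:ℝ) 1) :
    ∑ i ∈ Finset.range (d+1), w i * xofN φ T i ≤ ∑ i ∈ Finset.range (d+1), w i * c i + T := by
  have hac : ∀ i, AbsolutelyContinuousOnInterval (fun u => xofN φ u i) 0 T := fun i =>
    (lipschitzWith_xofN hφ.2.2.1 i).lipschitzOnWith.absolutelyContinuousOnInterval
  have hvofN : ∀ i, (fun u => vofN φ u i) = deriv fun u => xofN φ u i :=
    fun i => funext fun u => vofN_eq_deriv φ u i
  have hint : ∀ i, IntervalIntegrable (fun u => vofN φ u i) volume 0 T := fun i =>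
    hvofN i ▸ (hac i).intervalIntegrable_deriv
  have hftc : ∀ i, ∫ u in (0:ℝ)..T, vofN φ u i = xofN φ T i - xofN φ 0 i := fun i =>
    hvofN i ▸ (hac i).integral_deriv_eq_sub
  have hsum : IntervalIntegrable (fun u => ∑ i ∈ Finset.range (d+1), w i * vofN φ u i)
      volume 0 T := by
    simpa only [Finset.sum_fn] using
      IntervalIntegrable.sum (Finset.range (d+1)) fun i _ => (hint i).const_mul (w i)
  have hmono : ∫ u in (0:ℝ)..T, ∑ i ∈ Finset.range (d+1), w i * vofN φ u i
      ≤ ∫ u in (0:ℝ)..T, (1:ℝ) :=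
    intervalIntegral.integral_mono_ae_restrict hT.1 hsum intervalIntegrable_const
      (ae_restrict_of_ae_restrict_of_subset (Icc_subset_Icc le_rfl hT.2) hw)
  simp only [intervalIntegral.integral_finsetSum fun i _ => (hint i).const_mul (w i),
    intervalIntegral.integral_const_mul, hftc, intervalIntegral.integral_const, sub_zero,
    smul_eq_mul, mul_one, mul_sub, Finset.sum_sub_distrib] at hmono
  have hinit : ∑ i ∈ Finset.range (d+1), w i * xofN φ 0 i = ∑ i ∈ Finset.range (d+1), w i * c i :=
    Finset.sum_congr rfl fun i hi => by
      rw [xofN_zero_of_mem_Gamma hφ (Nat.lt_succ_iff.1 (Finset.mem_range.1 hi))]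
  linarith

end Paths

section Bounds

variable {d : ℕ} {c : ℕ → ℝ} {cc ctil : ℝ} {φ : C(I01, Fin (d+2) → ℝ)}

lemma sum_xofN_le_of_mem_Gamma (hc : LIMc c cc ctil) (hφ : φ ∈ Gamma d c) {T : ℝ}
    (hT : T ∈ Icc (0:ℝ) 1) : ∑ i ∈ Finset.range (d+1), xofN φ T i ≤ cc + T := by
  have hw : ∀ᵐ t ∂(volume.restrict (Icc (0:ℝ) 1)),
      ∑ i ∈ Finset.range (d+1), 1 * vofN φ t i ≤ 1 := by
    filter_upwards [hφ.2.2.2] with t ht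
    simpa only [one_mul] using (ht.1 d le_rfl).2
  have hc_le : ∑ i ∈ Finset.range (d+1), c i ≤ cc :=
    hc.cc_eq ▸ hc.summable.sum_le_tsum _ fun i _ => hc.nonneg i
  have := sum_mul_xofN_le_of_mem_Gamma hφ (fun _ => 1) hw hT
  simp only [one_mul] at this
  linarith

lemma sum_index_mul_xofN_le_of_mem_Gamma (hc : LIMc c cc ctil) (hφ : φ ∈ Gamma d c) {T : ℝ}
    (hT : T ∈ Icc (0:ℝ) 1) : ∑ i ∈ Finset.range (d+1), (i : ℝ) * xofN φ T i ≤ ctil + T := by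
  have hw : ∀ᵐ t ∂(volume.restrict (Icc (0:ℝ) 1)),
      ∑ i ∈ Finset.range (d+1), (i : ℝ) * vofN φ t i ≤ 1 := by
    filter_upwards [hφ.2.2.2] with t hΓt
    obtain ⟨hcum, htot, hidx, hnum⟩ := hΓt
    have hlast : 0 ≤ vofN φ t (d+1) := by
      rw [Finset.sum_range_succ] at htot
      linarith [(hcum d le_rfl).2]
    rw [Finset.sum_range_succ] at hidx
    nlinarith
  have hc_le : ∑ i ∈ Finset.range (d+1), (i : ℝ) * c i ≤ ctil :=
    hc.ctil_eq ▸ hc.mul_summable.sum_le_tsum _ fun i _ => mul_nonneg i.cast_nonneg (hc.nonneg i)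
  linarith [sum_mul_xofN_le_of_mem_Gamma hφ (fun i => (i : ℝ)) hw hT]

lemma sum_weight_xofN_le_sigf_of_mem_Gamma {β : ℝ → ℝ} (hc : LIMc c cc ctil)
    (hφ : φ ∈ Gamma d c) {T : ℝ} (hT : T ∈ Icc (0:ℝ) 1) (hβ : 0 ≤ β T) :
    ∑ i ∈ Finset.range (d+1), ((i : ℝ) + β T) * xofN φ T i ≤ sigf β cc ctil T := by
  have hmass := mul_le_mul_of_nonneg_left (sum_xofN_le_of_mem_Gamma hc hφ hT) hβ
  have hidx := sum_index_mul_xofN_le_of_mem_Gamma hc hφ hT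
  simp only [add_mul, Finset.sum_add_distrib, ← Finset.mul_sum, sigf]
  nlinarith

end Bounds

lemma ae_LdE_le_LdE_of_mem_Gamma {p β : ℝ → ℝ} {p0 β0 β1 : ℝ} (hND : ND p β p0 β0 β1)
    {c : ℕ → ℝ} {cc ctil : ℝ} (hc : LIMc c cc ctil) {s : ℕ}
    {φ : C(I01, Fin (s+2) → ℝ)} (hφ : φ ∈ Gamma s c) :
    ∀ᵐ t ∂(volume.restrict (Icc (0:ℝ) 1)), ∀ r ≤ s,
      LdE p β cc ctil r t (xofN φ t) (vofN φ t) ≤ LdE p β cc ctil s t (xofN φ t) (vofN φ t) := by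
  filter_upwards [ae_restrict_mem measurableSet_Icc, hφ.2.2.2]
    with t ht hΓt r hrs
  obtain ⟨hcum, -, -, hnum⟩ := hΓt
  have hβ : 0 ≤ β t := hND.β0_pos.le.trans (hND.β_lb t ht)
  have hp : 0 ≤ 1 - p t := by linarith [hND.p_le t ht, hND.p0_lt_one]
  have hweight := sum_weight_xofN_le_sigf_of_mem_Gamma hc hφ ht hβ
  have hσ : 0 ≤ sigf β cc ctil t := le_trans (Finset.sum_nonneg fun i _ =>
    mul_nonneg (by positivity) (xofN_nonneg_of_mem_Gamma hφ t i)) hweight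
  refine LdE_le_LdE hrs (fun i hi => ?_) (sub_nonneg.2 hnum) (fun i hi => ?_) ?_
  · exact sub_nonneg.2 (hcum i (by grind)).2
  · rw [denB, if_neg (by grind)]
    exact mul_nonneg hp (div_nonneg (mul_nonneg (by positivity)
      (xofN_nonneg_of_mem_Gamma hφ t i)) hσ)
  · exact mul_nonneg hp (sub_nonneg.2 (div_le_one_of_le₀ hweight hσ))

section ProjLim

variable {x : ∀ j : ℕ, C(I01, Fin (j+2) → ℝ)} {r s : ℕ}

lemma xofN_eq_of_mem_ProjLim (hx : x ∈ ProjLim) (hrs : r ≤ s) {i : ℕ} (hi : i ≤ r) (u : ℝ) :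
    xofN (x r) u i = xofN (x s) u i := by
  rw [xofN_of_lt _ (by omega), xofN_of_lt _ (by omega), pext, ← hx r s hrs]
  exact if_pos hi

lemma vofN_eq_of_mem_ProjLim (hx : x ∈ ProjLim) (hrs : r ≤ s) {i : ℕ} (hi : i ≤ r) (u : ℝ) :
    vofN (x r) u i = vofN (x s) u i := by
  simp only [vofN_eq_deriv, xofN_eq_of_mem_ProjLim hx hrs hi]

end ProjLim

/-- **Lemma (monotonicity of the truncated integrands).**  For `φ ∈ Γ*`, for almost every
`t ∈ [0,1]` and all `r < s`, `L_r(p_r(φ(t))) ≤ L_s(p_s(φ(t)))`. -/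
theorem Ld_monotone
    (p β : ℝ → ℝ) (p0 β0 β1 : ℝ) (hND : ND p β p0 β0 β1)
    (c : ℕ → ℝ) (cc ctil : ℝ) (hLIM : LIMc c cc ctil) :
    ∀ x ∈ GammaStar c, ∀ᵐ t ∂(volume.restrict (Set.Icc (0:ℝ) 1)),
      ∀ r s : ℕ, r < s →
        LdE p β cc ctil r t (xofN (x r) t) (vofN (x r) t)
          ≤ LdE p β cc ctil s t (xofN (x s) t) (vofN (x s) t) := by
  rintro x ⟨hx, hΓ⟩
  filter_upwards [ae_all_iff.2 fun s => ae_LdE_le_LdE_of_mem_Gamma hND hLIM (hΓ s)]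
    with t ht r s hrs
  rw [LdE_congr (fun i hi => xofN_eq_of_mem_ProjLim hx hrs.le hi t)
    (fun i hi => vofN_eq_of_mem_ProjLim hx hrs.le hi t)]
  exact ht s r hrs.le

end
end

section
/- Let ℓ(t) = e·t + c^d be the linear path with e = (e_0,…,e_{d+1}) satisfying e_i > 0 for all 0 ≤ i ≤ d+1, Σ_{i=0}^{d+1} e_i = 1 and Σ_{i=0}^{d+1} i e_i ≤ 1. Then I_d(ℓ) < ∞. -/
open MeasureTheory Real Set Filter Topology
open scoped ENNReal

noncomputable section

attribute [local instance] Classical.propDecidable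

/-! Along `ℓ` the velocity is the constant vector `e` on `(0,1)`, so every numerator
`1 - [e]_i` of `L_d` and the last one, `1 - Σ i e_i`, lies in `[0,1]`. Since the path starts
at `c^d ≥ 0` and grows at rate `e_i > 0`, each natural increment probability `u_i(t)` is at
least `κ_i t` for some `κ_i > 0` (using `p ≤ p0 < 1`, `β ≥ β0 > 0` and `σ ≤ 1 + β1 + c̃ + cβ1`);
for the last one this is because `σ - Σ_{i≤d} (i+β) ℓ_i ≥ β e_{d+1} t`, which is where
`Σ i e_i ≤ 1` enters. Hence each term `a log (a/u)` of the integrand is at most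
`|log κ_i| - log t`, which is integrable on `(0,1)`. -/

theorem EReal.coe_finset_sum {α : Type*} (s : Finset α) (f : α → ℝ) :
    ((∑ i ∈ s, f i : ℝ) : EReal) = ∑ i ∈ s, (f i : EReal) :=
  map_sum (⟨⟨Real.toEReal, EReal.coe_zero⟩, EReal.coe_add⟩ : ℝ →+ EReal) f s

lemma erealToENNReal_coe (r : ℝ) : erealToENNReal r = ENNReal.ofReal r := by
  simp [erealToENNReal]

lemma entTerm_of_pos (a : ℝ) {b : ℝ} (hb : 0 < b) :
    entTerm a b = ((a * Real.log (a / b) : ℝ) : EReal) := by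
  unfold entTerm
  split_ifs with ha hb'
  · simp [ha]
  · exact absurd hb hb'.not_gt
  · rfl

lemma mul_log_div_le {a b κ t : ℝ} (ha : 0 ≤ a) (ha1 : a ≤ 1) (hκ : 0 < κ) (ht : 0 < t)
    (ht1 : t ≤ 1) (hb : κ * t ≤ b) :
    a * Real.log (a / b) ≤ |Real.log κ| - Real.log t := by
  have hrhs : 0 ≤ |Real.log κ| - Real.log t := by
    linarith [abs_nonneg (Real.log κ), Real.log_nonpos ht.le ht1]
  rcases ha.eq_or_lt with rfl | ha0
  · simpa using hrhs
  have hb0 : 0 < b := (mul_pos hκ ht).trans_le hb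
  have hlog : Real.log (a / b) ≤ |Real.log κ| - Real.log t :=
    calc Real.log (a / b) ≤ Real.log (1 / (κ * t)) := by
          refine Real.log_le_log (div_pos ha0 hb0) ?_
          rw [div_le_div_iff₀ hb0 (mul_pos hκ ht)]
          nlinarith
      _ = -Real.log κ - Real.log t := by
          rw [one_div, Real.log_inv, Real.log_mul hκ.ne' ht.ne']; ring
      _ ≤ |Real.log κ| - Real.log t := by linarith [neg_abs_le (Real.log κ)]
  rcases le_total (Real.log (a / b)) 0 with h | h <;> nlinarith

lemma sum_range_sum_sub_partial_sum (v : ℕ → ℝ) (n : ℕ) :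
    ∑ i ∈ Finset.range n, (∑ l ∈ Finset.range (n + 1), v l - ∑ l ∈ Finset.range (i + 1), v l)
      = ∑ l ∈ Finset.range (n + 1), (l : ℝ) * v l := by
  induction n with
  | zero => simp
  | succ n ih =>
    have hshift : ∀ i ∈ Finset.range n,
        ∑ l ∈ Finset.range (n + 2), v l - ∑ l ∈ Finset.range (i + 1), v l
          = (∑ l ∈ Finset.range (n + 1), v l - ∑ l ∈ Finset.range (i + 1), v l) + v (n + 1) :=
      fun i _ => by rw [Finset.sum_range_succ v (n + 1)]; ring
    rw [Finset.sum_range_succ, Finset.sum_congr rfl hshift, Finset.sum_add_distrib, ih,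
      Finset.sum_const, Finset.card_range, Finset.sum_range_succ _ (n + 1), nsmul_eq_mul,
      Finset.sum_range_succ (fun l => (l : ℝ) * v l) (n + 1)]
    push_cast
    ring

lemma sum_numA_eq {v : ℕ → ℝ} {n : ℕ} (hv : ∑ l ∈ Finset.range (n + 1), v l = 1) :
    ∑ i ∈ Finset.range n, numA v i = ∑ l ∈ Finset.range (n + 1), (l : ℝ) * v l := by
  rw [← sum_range_sum_sub_partial_sum, hv]
  rfl

section LinearPath

variable {d : ℕ}

@[simp] lemma toN_coe (g : Fin (d+2) → ℝ) (i : Fin (d+2)) : toN g i = g i := by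
  simp [toN]

lemma toN_nonneg {g : Fin (d+2) → ℝ} (hg : ∀ i, 0 ≤ g i) (l : ℕ) : 0 ≤ toN g l := by
  unfold toN; split_ifs
  exacts [hg _, le_rfl]

lemma sum_range_toN (g : Fin (d+2) → ℝ) (f : ℕ → ℝ → ℝ) :
    ∑ l ∈ Finset.range (d+2), f l (toN g l) = ∑ i : Fin (d+2), f i (g i) := by
  rw [← Fin.sum_univ_eq_sum_range (fun l => f l (toN g l))]
  simp

lemma cvec_nonneg {c : ℕ → ℝ} (hc : ∀ i, 0 ≤ c i) (i : Fin (d+2)) : 0 ≤ cvec d c i := by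
  unfold cvec; split_ifs
  exacts [hc _, tsum_nonneg fun _ => hc _]

lemma toN_cvec_of_le (c : ℕ → ℝ) {l : ℕ} (hl : l ≤ d) : toN (cvec d c) l = c l := by
  simp [toN, cvec, hl, show l < d + 2 by omega]

lemma pext_of_mem (φ : C(I01, Fin (d+2) → ℝ)) {t : ℝ} (ht : t ∈ I01) :
    pext φ t = φ ⟨t, ht⟩ := by
  simp [pext, Set.projIcc_of_mem _ ht]

variable {e a : Fin (d+2) → ℝ} {ℓC : C(I01, Fin (d+2) → ℝ)}

lemma xofN_of_linear (hℓ : ∀ (t : I01) i, ℓC t i = e i * t + a i) {t : ℝ} (ht : t ∈ I01) :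
    xofN ℓC t = fun l => toN e l * t + toN a l := by
  funext l
  simp only [xofN, toN, pext_of_mem ℓC ht, hℓ]
  split_ifs <;> simp

lemma pderivC_of_linear (hℓ : ∀ (t : I01) i, ℓC t i = e i * t + a i) {t : ℝ}
    (ht : t ∈ Set.Ioo (0:ℝ) 1) (i : Fin (d+2)) : pderivC ℓC t i = e i := by
  have hev : (fun s => pext ℓC s i) =ᶠ[𝓝 t] fun s => e i * s + a i := by
    filter_upwards [Ioo_mem_nhds ht.1 ht.2] with s hs
    rw [pext_of_mem ℓC (Set.Ioo_subset_Icc_self hs), hℓ]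
  rw [pderivC, hev.deriv_eq]
  simp

lemma vofN_of_linear (hℓ : ∀ (t : I01) i, ℓC t i = e i * t + a i) {t : ℝ}
    (ht : t ∈ Set.Ioo (0:ℝ) 1) : vofN ℓC t = toN e := by
  simp only [vofN, pderivC_of_linear hℓ ht]

lemma lipschitzWith_pext_of_linear (hℓ : ∀ (t : I01) i, ℓC t i = e i * t + a i)
    {i : Fin (d+2)} (he : 0 ≤ e i) (he1 : e i ≤ 1) :
    LipschitzWith 1 (fun t => pext ℓC t i) := by
  have hproj := LipschitzWith.projIcc (zero_le_one' ℝ)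
  refine LipschitzWith.of_dist_le_mul fun s u => ?_
  simp only [pext, hℓ, Real.dist_eq, NNReal.coe_one, one_mul]
  calc |e i * (Set.projIcc 0 1 _ s : ℝ) + a i - (e i * (Set.projIcc 0 1 _ u : ℝ) + a i)|
      = e i * dist (Set.projIcc (0:ℝ) 1 zero_le_one s) (Set.projIcc 0 1 zero_le_one u) := by
        rw [Subtype.dist_eq, Real.dist_eq, add_sub_add_right_eq_sub, ← mul_sub, abs_mul,
          abs_of_nonneg he]
    _ ≤ 1 * dist s u := by
        gcongr
        simpa using hproj.dist_le_mul s u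
    _ = |s - u| := by rw [one_mul, Real.dist_eq]

lemma sum_range_toN_mem_Icc (he : ∀ i, 0 ≤ e i) (hes : ∑ i, e i = 1)
    {k : ℕ} (hk : k ≤ d + 2) :
    0 ≤ ∑ l ∈ Finset.range k, toN e l ∧ ∑ l ∈ Finset.range k, toN e l ≤ 1 := by
  refine ⟨Finset.sum_nonneg fun l _ => toN_nonneg he l, ?_⟩
  calc ∑ l ∈ Finset.range k, toN e l ≤ ∑ l ∈ Finset.range (d+2), toN e l :=
        Finset.sum_le_sum_of_subset_of_nonneg (Finset.range_subset_range.mpr hk)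
          fun l _ _ => toN_nonneg he l
    _ = 1 := by rw [sum_range_toN e fun _ x => x, hes]

lemma linear_mem_Gamma {c : ℕ → ℝ} (hc : ∀ i, 0 ≤ c i) (he : ∀ i, 0 ≤ e i)
    (hes : ∑ i, e i = 1) (hie : ∑ i : Fin (d+2), ((i : ℕ) : ℝ) * e i ≤ 1)
    (hℓ : ∀ (t : I01) i, ℓC t i = e i * t + cvec d c i) : ℓC ∈ Gamma d c := by
  have hEs : ∑ l ∈ Finset.range (d+2), toN e l = 1 := by
    rw [sum_range_toN e fun _ x => x, hes]
  have hiEs : ∑ l ∈ Finset.range (d+2), (l : ℝ) * toN e l ≤ 1 := by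
    rwa [sum_range_toN e fun l x => (l : ℝ) * x]
  have hnum := sum_numA_eq (n := d + 1) hEs
  have hIoo : ∀ᵐ t ∂(volume.restrict I01), t ∈ Set.Ioo (0:ℝ) 1 := by
    rw [← Measure.restrict_congr_set Ioo_ae_eq_Icc]
    exact ae_restrict_mem measurableSet_Ioo
  refine ⟨fun i => ?_, fun t i => ?_, fun i => ?_, ?_⟩
  · simp [hℓ, pt0]
  · rw [hℓ]
    exact add_nonneg (mul_nonneg (he i) t.2.1) (cvec_nonneg hc i)
  · exact lipschitzWith_pext_of_linear hℓ (he i)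
      (hes ▸ Finset.single_le_sum (fun j _ => he j) (Finset.mem_univ i))
  · filter_upwards [hIoo] with t ht
    rw [vofN_of_linear hℓ ht, hnum]
    exact ⟨fun i hi => sum_range_toN_mem_Icc he hes (by omega), hEs, rfl, hiEs⟩

end LinearPath

namespace LIMc

variable {c : ℕ → ℝ} {cc ctil : ℝ}

lemma sum_range_le (h : LIMc c cc ctil) (n : ℕ) : ∑ i ∈ Finset.range n, c i ≤ cc :=
  h.cc_eq ▸ h.summable.sum_le_tsum _ fun i _ => h.nonneg i

lemma sum_range_mul_le (h : LIMc c cc ctil) (n : ℕ) :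
    ∑ i ∈ Finset.range n, (i : ℝ) * c i ≤ ctil :=
  h.ctil_eq ▸ h.mul_summable.sum_le_tsum _ fun i _ => mul_nonneg i.cast_nonneg (h.nonneg i)

lemma cc_nonneg (h : LIMc c cc ctil) : 0 ≤ cc :=
  h.cc_eq ▸ tsum_nonneg h.nonneg

lemma ctil_nonneg (h : LIMc c cc ctil) : 0 ≤ ctil :=
  h.ctil_eq ▸ tsum_nonneg fun i => mul_nonneg i.cast_nonneg (h.nonneg i)

end LIMc

section Integrand

variable {p β : ℝ → ℝ} {c : ℕ → ℝ} {cc ctil t p0 β0 S w : ℝ} {d : ℕ} {x : ℕ → ℝ}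

lemma denB_ge (hp : 0 ≤ p t) (i : ℕ) :
    (1 - p t) * (((i : ℝ) + β t) * x i / sigf β cc ctil t) ≤ denB p β cc ctil t x i := by
  unfold denB
  split_ifs with hi
  · simp [hi, hp]
  · rfl

lemma le_denB (hp : 0 ≤ p t) (hp0 : p t ≤ p0) (hp01 : p0 ≤ 1) (hβ0 : 0 ≤ β0) (hβ : β0 ≤ β t)
    (hσ : 0 < sigf β cc ctil t) (hσS : sigf β cc ctil t ≤ S) (hw : 0 ≤ w) {i : ℕ}
    (hx : w ≤ x i) : (1 - p0) * β0 * w / S ≤ denB p β cc ctil t x i := by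
  have hS : 0 < S := hσ.trans_le hσS
  have hβi : β0 ≤ (i : ℝ) + β t := by linarith [i.cast_nonneg (α := ℝ)]
  have hxi : β0 * w ≤ ((i : ℝ) + β t) * x i := mul_le_mul hβi hx hw (hβ0.trans hβi)
  calc (1 - p0) * β0 * w / S = (1 - p0) * (β0 * w / S) := by ring
    _ ≤ (1 - p t) * (((i : ℝ) + β t) * x i / sigf β cc ctil t) :=
        mul_le_mul (by linarith) (div_le_div₀ (hxi.trans' (by positivity)) hxi hσ hσS)
          (by positivity) (by linarith)
    _ ≤ denB p β cc ctil t x i := denB_ge hp i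

lemma le_denBLast (hp0 : p t ≤ p0) (hp01 : p0 ≤ 1) (hβ0 : 0 ≤ β0)
    (hσ : 0 < sigf β cc ctil t) (hσS : sigf β cc ctil t ≤ S) (hw : 0 ≤ w)
    (hgap : β0 * w ≤ sigf β cc ctil t - ∑ i ∈ Finset.range (d+1), ((i : ℝ) + β t) * x i) :
    (1 - p0) * β0 * w / S ≤ denBLast p β cc ctil t x d := by
  have hS : 0 < S := hσ.trans_le hσS
  calc (1 - p0) * β0 * w / S = (1 - p0) * (β0 * w / S) := by ring
    _ ≤ (1 - p t) * ((sigf β cc ctil t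
          - ∑ i ∈ Finset.range (d+1), ((i : ℝ) + β t) * x i) / sigf β cc ctil t) :=
        mul_le_mul (by linarith) (div_le_div₀ (hgap.trans' (by positivity)) hgap hσ hσS)
          (by positivity) (by linarith)
    _ = denBLast p β cc ctil t x d := by rw [denBLast, sub_div, div_self hσ.ne']

lemma sigf_pos (ht : 0 < t) (hβ : 0 < β t) (hcc : 0 ≤ cc) (hctil : 0 ≤ ctil) :
    0 < sigf β cc ctil t := by
  unfold sigf; positivity

lemma sigf_le {β1 : ℝ} (ht1 : t ≤ 1) (hβ0 : 0 ≤ β t) (hβ1 : β t ≤ β1)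
    (hcc : 0 ≤ cc) : sigf β cc ctil t ≤ 1 + β1 + ctil + cc * β1 := by
  unfold sigf; nlinarith

lemma le_sigf_sub_sum_linear (hLIM : LIMc c cc ctil) {E : ℕ → ℝ} (hE : ∀ l, 0 ≤ E l)
    (hEs : ∑ l ∈ Finset.range (d+2), E l = 1)
    (hiE : ∑ l ∈ Finset.range (d+2), (l : ℝ) * E l ≤ 1) (hβ : 0 ≤ β t) (ht : 0 ≤ t) :
    β t * (E (d+1) * t) ≤ sigf β cc ctil t
      - ∑ i ∈ Finset.range (d+1), ((i : ℝ) + β t) * (E i * t + toN (cvec d c) i) := by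
  have hterm : ∀ i ∈ Finset.range (d+1), ((i : ℝ) + β t) * (E i * t + toN (cvec d c) i)
      = t * ((i : ℝ) * E i) + β t * t * E i + (i : ℝ) * c i + β t * c i := by
    intro i hi
    rw [toN_cvec_of_le c (Nat.lt_succ_iff.mp (Finset.mem_range.mp hi))]
    ring
  rw [Finset.sum_congr rfl hterm]
  simp only [Finset.sum_add_distrib, ← Finset.mul_sum]
  rw [Finset.sum_range_succ] at hEs hiE
  have hc := hLIM.sum_range_le (d+1)
  have hic := hLIM.sum_range_mul_le (d+1)
  have hEd := hE (d+1)
  have hB : β t * t * ∑ i ∈ Finset.range (d+1), E i = β t * t * (1 - E (d+1)) := by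
    rw [← hEs]; ring
  push_cast at hiE
  have hA : 0 ≤ 1 - ∑ i ∈ Finset.range (d+1), (i : ℝ) * E i := by
    nlinarith [(d.cast_nonneg (α := ℝ))]
  unfold sigf
  nlinarith [mul_nonneg ht hA, mul_nonneg hβ (sub_nonneg.mpr hc)]

lemma erealToENNReal_LdE_le {x v κ : ℕ → ℝ} (ht : 0 < t) (ht1 : t ≤ 1)
    (hκ : ∀ i < d + 2, 0 < κ i) (hnum : ∀ i ≤ d, 0 ≤ numA v i ∧ numA v i ≤ 1)
    (hnumLast : 0 ≤ numALast v d ∧ numALast v d ≤ 1)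
    (hden : ∀ i ≤ d, κ i * t ≤ denB p β cc ctil t x i)
    (hdenLast : κ (d+1) * t ≤ denBLast p β cc ctil t x d) :
    erealToENNReal (LdE p β cc ctil d t x v)
      ≤ ENNReal.ofReal (∑ i ∈ Finset.range (d+2), (|Real.log (κ i)| - Real.log t)) := by
  have hpos : ∀ i ∈ Finset.range (d+1), 0 < denB p β cc ctil t x i := fun i hi =>
    have hi : i ≤ d := Nat.lt_succ_iff.mp (Finset.mem_range.mp hi)
    (mul_pos (hκ i (by omega)) ht).trans_le (hden i hi)
  have hposLast := (mul_pos (hκ (d+1) (by omega)) ht).trans_le hdenLast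
  rw [LdE, Finset.sum_congr rfl fun i hi => entTerm_of_pos _ (hpos i hi),
    entTerm_of_pos _ hposLast, ← EReal.coe_finset_sum, ← EReal.coe_add, erealToENNReal_coe,
    Finset.sum_range_succ _ (d+1)]
  refine ENNReal.ofReal_le_ofReal (add_le_add (Finset.sum_le_sum fun i hi => ?_) ?_)
  · have hi : i ≤ d := Nat.lt_succ_iff.mp (Finset.mem_range.mp hi)
    exact mul_log_div_le (hnum i hi).1 (hnum i hi).2 (hκ i (by omega)) ht ht1 (hden i hi)
  · exact mul_log_div_le hnumLast.1 hnumLast.2 (hκ (d+1) (by omega)) ht ht1 hdenLast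

end Integrand

variable {d : ℕ} {p β : ℝ → ℝ} {p0 β0 β1 : ℝ} {c : ℕ → ℝ} {cc ctil t : ℝ}
  {e : Fin (d+2) → ℝ} {ℓC : C(I01, Fin (d+2) → ℝ)}

lemma erealToENNReal_LdE_linear_le (hND : ND p β p0 β0 β1) (hLIM : LIMc c cc ctil)
    (he : ∀ i, 0 < e i) (hes : ∑ i, e i = 1) (hie : ∑ i : Fin (d+2), ((i : ℕ) : ℝ) * e i ≤ 1)
    (hℓ : ∀ (t : I01) i, ℓC t i = e i * t + cvec d c i) (ht : t ∈ Set.Ioo (0:ℝ) 1) :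
    erealToENNReal (LdE p β cc ctil d t (xofN ℓC t) (vofN ℓC t))
      ≤ ENNReal.ofReal (∑ i ∈ Finset.range (d+2),
          (|Real.log ((1 - p0) * β0 * toN e i / (1 + β1 + ctil + cc * β1))| - Real.log t)) := by
  have htI : t ∈ I01 := Set.Ioo_subset_Icc_self ht
  have hβt : β0 ≤ β t := hND.β_lb t htI
  have hβ0 := hND.β0_pos
  have hσ : 0 < sigf β cc ctil t :=
    sigf_pos ht.1 (hβ0.trans_le hβt) hLIM.cc_nonneg hLIM.ctil_nonneg
  have hσS : sigf β cc ctil t ≤ 1 + β1 + ctil + cc * β1 :=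
    sigf_le ht.2.le (by linarith) (hND.β_ub t htI) hLIM.cc_nonneg
  have hE : ∀ l, 0 ≤ toN e l := toN_nonneg fun i => (he i).le
  have hEs : ∑ l ∈ Finset.range (d+2), toN e l = 1 := by
    rw [sum_range_toN e fun _ x => x, hes]
  have hiE : ∑ l ∈ Finset.range (d+2), (l : ℝ) * toN e l ≤ 1 := by
    rwa [sum_range_toN e fun l x => (l : ℝ) * x]
  have hp := hND.p_nonneg t htI
  have hp0 := hND.p_le t htI
  have hp01 := hND.p0_lt_one.le
  rw [xofN_of_linear hℓ htI, vofN_of_linear hℓ ht]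
  refine erealToENNReal_LdE_le ht.1 ht.2.le (fun i hi => ?_) (fun i hi => ?_) ?_
    (fun i hi => ?_) ?_
  · have hEi : 0 < toN e i := by simpa [toN, hi] using he ⟨i, hi⟩
    exact div_pos (mul_pos (mul_pos (sub_pos.mpr hND.p0_lt_one) hβ0) hEi) (hσ.trans_le hσS)
  · have h := sum_range_toN_mem_Icc (fun i => (he i).le) hes (k := i + 1) (by omega)
    exact ⟨by unfold numA; linarith, by unfold numA; linarith⟩
  · rw [numALast, sum_numA_eq hEs]
    have := Finset.sum_nonneg fun l (_ : l ∈ Finset.range (d+2)) =>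
      mul_nonneg l.cast_nonneg (hE l)
    exact ⟨by linarith, by linarith⟩
  · refine Eq.trans_le (by ring)
      (le_denB hp hp0 hp01 hβ0.le hβt hσ hσS (mul_nonneg (hE i) ht.1.le) ?_)
    exact le_add_of_nonneg_right (toN_nonneg (cvec_nonneg hLIM.nonneg) i)
  · refine Eq.trans_le (by ring) <|
      le_denBLast hp0 hp01 hβ0.le hσ hσS (mul_nonneg (hE _) ht.1.le) ((mul_le_mul_of_nonneg_right hβt (mul_nonneg (hE _) ht.1.le)).trans
        (le_sigf_sub_sum_linear hLIM hE hEs hiE (hβ0.le.trans hβt) ht.1.le))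

/-- **Lemma.**  For the linear path `ℓ(t) = e t + c^d` with `e_i > 0`, `Σ e_i = 1` and
`Σ i e_i ≤ 1`, one has `I_d(ℓ) < ∞`. -/
theorem Irate_linear_finite
    (p β : ℝ → ℝ) (p0 β0 β1 : ℝ) (hND : ND p β p0 β0 β1)
    (c : ℕ → ℝ) (cc ctil : ℝ) (hLIM : LIMc c cc ctil) (d : ℕ)
    (e : Fin (d+2) → ℝ) (he : ∀ i, 0 < e i) (hes : ∑ i, e i = 1)
    (hie : ∑ i : Fin (d+2), ((i : ℕ) : ℝ) * e i ≤ 1)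
    (ℓC : C(I01, Fin (d+2) → ℝ))
    (hℓ : ∀ (t : I01) (i : Fin (d+2)), ℓC t i = e i * (t : ℝ) + cvec d c i) :
    Irate p β c cc ctil d ℓC < ⊤ := by
  set κ : ℕ → ℝ := fun i => (1 - p0) * β0 * toN e i / (1 + β1 + ctil + cc * β1)
  have hlog : IntegrableOn Real.log (Set.Ioo 0 1) :=
    (intervalIntegrable_iff_integrableOn_Ioo_of_le zero_le_one).mp
      intervalIntegral.intervalIntegrable_log'
  have hbound : IntegrableOn (fun t => ∑ i ∈ Finset.range (d+2), (|Real.log (κ i)| - Real.log t))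
      (Set.Ioo 0 1) :=
    integrable_finsetSum _ fun i _ => (integrable_const _).sub hlog
  rw [Irate, if_pos (linear_mem_Gamma hLIM.nonneg (fun i => (he i).le) hes hie hℓ),
    ← Measure.restrict_congr_set Ioo_ae_eq_Icc]
  calc _ ≤ _ := setLIntegral_mono' measurableSet_Ioo fun t ht =>
          erealToENNReal_LdE_linear_le hND hLIM he hes hie hℓ ht
    _ < ⊤ := hbound.lintegral_lt_top
end
end
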